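/- Let d ≥ 2, n ≥ 1, and let H be a subgroup of U(d). Every element of the subgroup of invertible matrices on (ℂ^d)^{⊗n} generated by H^{×n} ∪ {P(σ) : σ a permutation of Fin n} can be written in the form W · P(σ) with W ∈ H^{×n} and σ a permutation of Fin n, and this representation is unique: if W₁ · P(σ₁) = W₂ · P(σ₂) with W₁, W₂ ∈ H^{×n}, then W₁ = W₂ and σ₁ = σ₂. -/

import Mathlib

/- Every element of the subgroup of invertible matrices on (ℂ^d)^{⊗n} generated by
H^{×n} ∪ {P(σ)} can be written uniquely in the canonical form W · P(σ) with
W ∈ H^{×n} and σ a permutation of Fin n. -/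

open Matrix

noncomputable section

/-- Matrices on the n-fold tensor power (ℂ^d)^{⊗n}. -/
abbrev MatN (d n : ℕ) := Matrix (Fin n → Fin d) (Fin n → Fin d) ℂ

/-- The tensor product V₁ ⊗ ⋯ ⊗ Vₙ of n matrices on ℂ^d. -/
def tensProd (d n : ℕ) (V : Fin n → Matrix (Fin d) (Fin d) ℂ) : MatN d n :=
  Matrix.of fun x y => ∏ i, V i (x i) (y i)

/-- The permutation operator P(σ) on (ℂ^d)^{⊗n}. -/
def permMat (d n : ℕ) (σ : Equiv.Perm (Fin n)) : MatN d n :=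
  Matrix.of fun x y => if x = y ∘ ⇑σ⁻¹ then 1 else 0

/-- H^{×n} : the set of tensor products V₁ ⊗ ⋯ ⊗ Vₙ with each Vᵢ ∈ H. -/
def groupTensorSet (d n : ℕ) (H : Subgroup (Matrix.unitaryGroup (Fin d) ℂ)) :
    Set (MatN d n) :=
  {W | ∃ V : Fin n → H,
    W = tensProd d n fun i => ((V i : Matrix.unitaryGroup (Fin d) ℂ) : Matrix (Fin d) (Fin d) ℂ)}

/-! Inside the group of units, the tensor products `tensProd V` with `Vᵢ ∈ H` form a
subgroup `A` and the permutation operators a subgroup `B`. Conjugating by `P(σ)` permutes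
the tensor factors, so `B` normalizes `A` and the group generated by both is `A * B`.
Uniqueness amounts to `A ⊓ B = ⊥`. The entries of a tensor product satisfy
`M x y * M x' y' = M x' y * M x y'` whenever no coordinate separates both `x` from `x'` and
`y` from `y'`. If `σ k ≠ k`, this fails for `P(σ)` with `x = y` constant and `x'`, `y'`
obtained from it by changing the letter at `σ k`, resp. at `k`, to a different one (this is
where `2 ≤ d` enters). -/

variable {d n : ℕ}

theorem tensProd_mul (V W : Fin n → Matrix (Fin d) (Fin d) ℂ) :
    tensProd d n V * tensProd d n W = tensProd d n fun i => V i * W i := by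
  ext x y
  simp only [tensProd, mul_apply, of_apply, Finset.prod_univ_sum, Fintype.piFinset_univ,
    Finset.prod_mul_distrib]

theorem tensProd_one : tensProd d n (fun _ => (1 : Matrix (Fin d) (Fin d) ℂ)) = 1 := by
  ext x y
  by_cases h : x = y
  · simp [tensProd, h, one_apply]
  · obtain ⟨i, hi⟩ := Function.ne_iff.mp h
    simpa [tensProd, one_apply, h] using Finset.prod_eq_zero (Finset.mem_univ i) (by simp [hi])

theorem tensProd_apply_mul_tensProd_apply_comm (V : Fin n → Matrix (Fin d) (Fin d) ℂ)
    {x x' y y' : Fin n → Fin d} (h : ∀ i, x i = x' i ∨ y i = y' i) :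
    tensProd d n V x y * tensProd d n V x' y' = tensProd d n V x' y * tensProd d n V x y' := by
  simp only [tensProd, of_apply, ← Finset.prod_mul_distrib]
  refine Finset.prod_congr rfl fun i _ => ?_
  rcases h i with h | h <;> rw [h]
  exact mul_comm _ _

theorem permMat_mul_apply (σ : Equiv.Perm (Fin n)) (M : MatN d n) (x y : Fin n → Fin d) :
    (permMat d n σ * M) x y = M (x ∘ σ) y := by
  simp [permMat, mul_apply, Equiv.Perm.coe_inv, Equiv.eq_comp_symm, eq_comm]

theorem mul_permMat_apply (M : MatN d n) (σ : Equiv.Perm (Fin n)) (x y : Fin n → Fin d) :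
    (M * permMat d n σ) x y = M x (y ∘ ⇑σ⁻¹) := by
  simp [permMat, mul_apply]

theorem permMat_mul (σ τ : Equiv.Perm (Fin n)) :
    permMat d n σ * permMat d n τ = permMat d n (σ * τ) := by
  ext x y
  rw [permMat_mul_apply]
  simp only [permMat, of_apply, Equiv.Perm.coe_inv, Equiv.eq_comp_symm, Equiv.Perm.coe_mul]
  rfl

theorem permMat_one : permMat d n 1 = 1 := by
  ext x y
  simp [permMat, one_apply]

theorem permMat_mul_tensProd_mul_permMat_inv (σ : Equiv.Perm (Fin n))
    (V : Fin n → Matrix (Fin d) (Fin d) ℂ) :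
    permMat d n σ * tensProd d n V * permMat d n σ⁻¹ =
      tensProd d n fun i => V (σ⁻¹ i) := by
  ext x y
  rw [mul_permMat_apply, permMat_mul_apply]
  simp only [tensProd, of_apply, Function.comp_apply, inv_inv]
  rw [← Equiv.prod_comp σ⁻¹]
  simp

theorem eq_one_of_tensProd_eq_permMat (hd : 2 ≤ d) {V : Fin n → Matrix (Fin d) (Fin d) ℂ}
    {σ : Equiv.Perm (Fin n)} (h : tensProd d n V = permMat d n σ) : σ = 1 := by
  by_contra hσ
  obtain ⟨k, hk⟩ : ∃ k, σ k ≠ k := by simpa [Equiv.ext_iff] using hσ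
  let a : Fin d := ⟨0, by omega⟩
  let b : Fin d := ⟨1, by omega⟩
  have hba : b ≠ a := by simp [a, b, Fin.ext_iff]
  let y : Fin n → Fin d := fun _ => a
  let x' := Function.update y (σ k) b
  let y' := Function.update y k b
  have hx' : x' = y' ∘ ⇑σ⁻¹ := (Function.update_comp_equiv y σ.symm k b).symm
  have hne : x' ≠ y := fun he => hba (by simpa [x', y] using congrFun he (σ k))
  have hsplit : ∀ i, y i = x' i ∨ y i = y' i := by
    intro i
    by_cases hi : i = σ k
    · exact Or.inr (by simp [y', hi, Function.update_of_ne hk])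
    · exact Or.inl (by simp [x', Function.update_of_ne hi])
  have key := tensProd_apply_mul_tensProd_apply_comm V hsplit
  have hyy : permMat d n σ y y = 1 := if_pos rfl
  have hx'y' : permMat d n σ x' y' = 1 := if_pos hx'
  have hx'y : permMat d n σ x' y = 0 := if_neg hne
  rw [h, hyy, hx'y', hx'y] at key
  norm_num at key

theorem permMat_injective (hd : 2 ≤ d) : Function.Injective (permMat d n) := by
  intro σ τ h
  have hone : tensProd d n (fun _ => 1) = permMat d n (σ⁻¹ * τ) := by
    rw [tensProd_one, ← permMat_mul, ← h, permMat_mul, inv_mul_cancel, permMat_one]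
  exact inv_mul_eq_one.mp (eq_one_of_tensProd_eq_permMat hd hone)

def tensProdHom (d n : ℕ) (H : Subgroup (unitaryGroup (Fin d) ℂ)) :
    (Fin n → H) →* MatN d n where
  toFun V := tensProd d n fun i => ((V i : unitaryGroup (Fin d) ℂ) : Matrix (Fin d) (Fin d) ℂ)
  map_one' := tensProd_one
  map_mul' _ _ := (tensProd_mul _ _).symm

def permMatHom (d n : ℕ) : Equiv.Perm (Fin n) →* MatN d n where
  toFun := permMat d n
  map_one' := permMat_one
  map_mul' σ τ := (permMat_mul σ τ).symm

def tensorSubgroup (d n : ℕ) (H : Subgroup (unitaryGroup (Fin d) ℂ)) : Subgroup (MatN d n)ˣ :=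
  (tensProdHom d n H).toHomUnits.range

def permSubgroup (d n : ℕ) : Subgroup (MatN d n)ˣ :=
  (permMatHom d n).toHomUnits.range

section Subgroups

variable {H : Subgroup (unitaryGroup (Fin d) ℂ)}

theorem mem_tensorSubgroup_iff {g : (MatN d n)ˣ} :
    g ∈ tensorSubgroup d n H ↔ (g : MatN d n) ∈ groupTensorSet d n H := by
  simp [tensorSubgroup, groupTensorSet, Units.ext_iff, eq_comm, tensProdHom]

theorem mem_permSubgroup_iff {g : (MatN d n)ˣ} :
    g ∈ permSubgroup d n ↔ ∃ σ, (g : MatN d n) = permMat d n σ := by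
  simp [permSubgroup, Units.ext_iff, eq_comm, permMatHom]

variable (H) in
theorem permSubgroup_le_normalizer_tensorSubgroup :
    permSubgroup d n ≤ Subgroup.normalizer (tensorSubgroup d n H : Set (MatN d n)ˣ) := by
  rw [Subgroup.le_normalizer_iff]
  rintro _ ⟨σ, rfl⟩ _ ⟨V, rfl⟩
  refine ⟨fun i => V (σ⁻¹ i), Units.ext ?_⟩
  rw [← map_inv, Units.val_mul, Units.val_mul]
  exact (permMat_mul_tensProd_mul_permMat_inv σ fun i => (V i : Matrix (Fin d) (Fin d) ℂ)).symm

variable (H) in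
theorem disjoint_tensorSubgroup_permSubgroup (hd : 2 ≤ d) :
    Disjoint (tensorSubgroup d n H) (permSubgroup d n) := by
  rw [Subgroup.disjoint_def]
  rintro _ ⟨V, rfl⟩ ⟨σ, hσ⟩
  obtain rfl := eq_one_of_tensProd_eq_permMat hd (congrArg Units.val hσ).symm
  rw [← hσ, map_one]

theorem closure_generators_eq_tensorSubgroup_sup_permSubgroup :
    Subgroup.closure {g : (MatN d n)ˣ | (g : MatN d n) ∈
      groupTensorSet d n H ∪ {P | ∃ σ : Equiv.Perm (Fin n), P = permMat d n σ}} =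
      tensorSubgroup d n H ⊔ permSubgroup d n := by
  have hgen : {g : (MatN d n)ˣ | (g : MatN d n) ∈
      groupTensorSet d n H ∪ {P | ∃ σ : Equiv.Perm (Fin n), P = permMat d n σ}} =
      (tensorSubgroup d n H : Set (MatN d n)ˣ) ∪ permSubgroup d n := by
    ext g
    simp [mem_tensorSubgroup_iff, mem_permSubgroup_iff]
  rw [hgen, Subgroup.closure_union, Subgroup.closure_eq, Subgroup.closure_eq]

theorem exists_eq_mul_permMat_of_mem_sup {g : (MatN d n)ˣ}
    (hg : g ∈ tensorSubgroup d n H ⊔ permSubgroup d n) :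
    ∃ W ∈ groupTensorSet d n H, ∃ σ : Equiv.Perm (Fin n),
      (g : MatN d n) = W * permMat d n σ := by
  rw [← SetLike.mem_coe, Subgroup.coe_mul_of_right_le_normalizer_left _ _
    (permSubgroup_le_normalizer_tensorSubgroup H)] at hg
  obtain ⟨a, ha, b, ⟨σ, rfl⟩, rfl⟩ := hg
  exact ⟨a, mem_tensorSubgroup_iff.mp ha, σ, rfl⟩

theorem eq_and_eq_of_mul_permMat_eq_mul_permMat (hd : 2 ≤ d) {W₁ W₂ : MatN d n}
    (hW₁ : W₁ ∈ groupTensorSet d n H) (hW₂ : W₂ ∈ groupTensorSet d n H)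
    {σ₁ σ₂ : Equiv.Perm (Fin n)} (h : W₁ * permMat d n σ₁ = W₂ * permMat d n σ₂) :
    W₁ = W₂ ∧ σ₁ = σ₂ := by
  obtain ⟨V₁, rfl⟩ := hW₁
  obtain ⟨V₂, rfl⟩ := hW₂
  have hpair := Subgroup.mul_injective_of_disjoint (disjoint_tensorSubgroup_permSubgroup H hd)
    (a₁ := (⟨_, V₁, rfl⟩, ⟨_, σ₁, rfl⟩)) (a₂ := (⟨_, V₂, rfl⟩, ⟨_, σ₂, rfl⟩))
    (Units.ext h)
  simp only [Prod.ext_iff, Subtype.ext_iff, Units.ext_iff] at hpair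
  exact ⟨hpair.1, permMat_injective hd hpair.2⟩

end Subgroups

theorem canonical_form_semidirect_general (d n : ℕ) (hd : 2 ≤ d)
    (H : Subgroup (Matrix.unitaryGroup (Fin d) ℂ)) :
    (∀ g ∈ Subgroup.closure
        {g : (MatN d n)ˣ | (g : MatN d n) ∈
          groupTensorSet d n H ∪ {P | ∃ σ : Equiv.Perm (Fin n), P = permMat d n σ}},
      ∃ W ∈ groupTensorSet d n H, ∃ σ : Equiv.Perm (Fin n),
        (g : MatN d n) = W * permMat d n σ) ∧
    (∀ W₁ ∈ groupTensorSet d n H, ∀ W₂ ∈ groupTensorSet d n H,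
      ∀ σ₁ σ₂ : Equiv.Perm (Fin n),
        W₁ * permMat d n σ₁ = W₂ * permMat d n σ₂ → W₁ = W₂ ∧ σ₁ = σ₂) := by
  refine ⟨fun g hg => ?_, fun _ hW₁ _ hW₂ _ _ h => ?_⟩
  · rw [closure_generators_eq_tensorSubgroup_sup_permSubgroup] at hg
    exact exists_eq_mul_permMat_of_mem_sup hg
  · exact eq_and_eq_of_mul_permMat_eq_mul_permMat hd hW₁ hW₂ h

theorem canonical_form_semidirect (d n : ℕ) (hd : 2 ≤ d) (hn : 1 ≤ n)
    (H : Subgroup (Matrix.unitaryGroup (Fin d) ℂ)) :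
    (∀ g ∈ Subgroup.closure
        {g : (MatN d n)ˣ | (g : MatN d n) ∈
          groupTensorSet d n H ∪ {P | ∃ σ : Equiv.Perm (Fin n), P = permMat d n σ}},
      ∃ W ∈ groupTensorSet d n H, ∃ σ : Equiv.Perm (Fin n),
        (g : MatN d n) = W * permMat d n σ) ∧
    (∀ W₁ ∈ groupTensorSet d n H, ∀ W₂ ∈ groupTensorSet d n H,
      ∀ σ₁ σ₂ : Equiv.Perm (Fin n),
        W₁ * permMat d n σ₁ = W₂ * permMat d n σ₂ → W₁ = W₂ ∧ σ₁ = σ₂) :=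
  canonical_form_semidirect_general d n hd H
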